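/- arXiv:2504.14334 — 2 statements merged into one kernel-verified Lean document; each statement's English description precedes it below -/
import Mathlib

section
/- Data-driven closed-loop representation: if matrices L, N ∈ ℝ^{T×p} satisfy [I; K] = [Z₀; U₀] L and [0; K] = [Z₀; U₀] N, and the data are consistent, i.e. Z₁ = A Z₀ + B U₀, then for all z, e ∈ ℝᵖ, (A + BK) z + BK e = Z₁ L z + Z₁ N e. -/
open Matrix

/-- Data-driven closed-loop representation: `(A + BK) z + BK e = Z₁ L z + Z₁ N e`. -/
theorem data_driven_closed_loop_representation (p m T : ℕ)
    (A : Matrix (Fin p) (Fin p) ℝ) (B : Matrix (Fin p) (Fin m) ℝ)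
    (K : Matrix (Fin m) (Fin p) ℝ)
    (Z₀ Z₁ : Matrix (Fin p) (Fin T) ℝ) (U₀ : Matrix (Fin m) (Fin T) ℝ)
    (L N : Matrix (Fin T) (Fin p) ℝ)
    (hdata : Z₁ = A * Z₀ + B * U₀)
    (hL1 : Z₀ * L = 1) (hL2 : U₀ * L = K)
    (hN1 : Z₀ * N = 0) (hN2 : U₀ * N = K) :
    ∀ z e : Fin p → ℝ,
      (A + B * K).mulVec z + (B * K).mulVec e =
        (Z₁ * L).mulVec z + (Z₁ * N).mulVec e := by
  intro z e
  have h1 : Z₁ * L = A + B * K := by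
    rw [hdata, Matrix.add_mul, Matrix.mul_assoc, Matrix.mul_assoc, hL1, hL2, Matrix.mul_one]
  have h2 : Z₁ * N = B * K := by
    rw [hdata, Matrix.add_mul, Matrix.mul_assoc, Matrix.mul_assoc, hN1, hN2, Matrix.mul_zero, zero_add]
  rw [h1, h2]
end

section
/- If Ψ = [[LᵀZ₁ᵀ S Z₁L − αS, LᵀZ₁ᵀ S Z₁N],[NᵀZ₁ᵀ S Z₁L, NᵀZ₁ᵀ S Z₁N]] is negative semidefinite, where S is symmetric positive definite and 0 < α < 1, then along any trajectory of z(k+1) = Z₁L z(k) + Z₁N e(k) (with arbitrary error sequences e(k)) one has V(z(k)) ≤ αᵏ V(z(0)) for all k ≥ 0, where V(z) = zᵀ S z; consequently the trajectory of z converges to 0 exponentially. -/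
open Matrix Filter

theorem dot_trip_aux {p q r : ℕ} (A : Matrix (Fin p) (Fin q) ℝ) (S' : Matrix (Fin p) (Fin p) ℝ)
    (B : Matrix (Fin p) (Fin r) ℝ) (x : Fin q → ℝ) (y : Fin r → ℝ) :
    A.mulVec x ⬝ᵥ S'.mulVec (B.mulVec y) = x ⬝ᵥ (Aᵀ * S' * B).mulVec y := by
  rw [mulVec_mulVec, dotProduct_mulVec, vecMul_mulVec, ← dotProduct_mulVec, Matrix.mul_assoc]

/-- If the block matrix `Ψ` is negative semidefinite, `S ≻ 0` and `0 < α < 1`, then along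
any trajectory of `z(k+1) = Z₁L z(k) + Z₁N e(k)` one has `V(z(k)) ≤ αᵏ V(z(0))`, and
`z(k) → 0`. -/
theorem nsd_quadratic_certificate_gives_exponential_decay (p T : ℕ)
    (S : Matrix (Fin p) (Fin p) ℝ) (hS : S.PosDef)
    (α : ℝ) (hα0 : 0 < α) (hα1 : α < 1)
    (Z₁ : Matrix (Fin p) (Fin T) ℝ) (L N : Matrix (Fin T) (Fin p) ℝ)
    (hΨ : (-(Matrix.fromBlocks
        (Lᵀ * Z₁ᵀ * S * Z₁ * L - α • S) (Lᵀ * Z₁ᵀ * S * Z₁ * N)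
        (Nᵀ * Z₁ᵀ * S * Z₁ * L) (Nᵀ * Z₁ᵀ * S * Z₁ * N))).PosSemidef)
    (z e : ℕ → Fin p → ℝ)
    (hdyn : ∀ k, z (k + 1) = (Z₁ * L).mulVec (z k) + (Z₁ * N).mulVec (e k)) :
    (∀ k, z k ⬝ᵥ S.mulVec (z k) ≤ α ^ k * (z 0 ⬝ᵥ S.mulVec (z 0))) ∧
      Tendsto z atTop (nhds 0) := by
  have key : ∀ x y : Fin p → ℝ,
      ((Z₁*L) *ᵥ x + (Z₁*N) *ᵥ y) ⬝ᵥ S *ᵥ ((Z₁*L) *ᵥ x + (Z₁*N) *ᵥ y) ≤ α * (x ⬝ᵥ S *ᵥ x) := by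
    intro x y
    have h := hΨ.dotProduct_mulVec_nonneg (Sum.elim x y)
    simp only [star_trivial, neg_mulVec, dotProduct_neg, fromBlocks_mulVec, Sum.elim_comp_inl,
      Sum.elim_comp_inr, sumElim_dotProduct_sumElim, dotProduct_add, sub_mulVec, dotProduct_sub,
      smul_mulVec, dotProduct_smul, smul_eq_mul] at h
    have e1 := dot_trip_aux (Z₁*L) S (Z₁*L) x x
    have e2 := dot_trip_aux (Z₁*L) S (Z₁*N) x y
    have e3 := dot_trip_aux (Z₁*N) S (Z₁*L) y x
    have e4 := dot_trip_aux (Z₁*N) S (Z₁*N) y y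
    simp only [transpose_mul, Matrix.mul_assoc] at e1 e2 e3 e4
    simp only [Matrix.mul_assoc] at h
    rw [mulVec_add, dotProduct_add, add_dotProduct, add_dotProduct]
    linarith
  have hdecay : ∀ k, z k ⬝ᵥ S.mulVec (z k) ≤ α ^ k * (z 0 ⬝ᵥ S.mulVec (z 0)) := by
    intro k
    induction k with
    | zero => simp
    | succ k ih =>
      have h1 : z (k+1) ⬝ᵥ S.mulVec (z (k+1)) ≤ α * (z k ⬝ᵥ S.mulVec (z k)) := by
        rw [hdyn k]; exact key (z k) (e k)
      calc z (k+1) ⬝ᵥ S.mulVec (z (k+1)) ≤ α * (z k ⬝ᵥ S.mulVec (z k)) := h1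
        _ ≤ α * (α ^ k * (z 0 ⬝ᵥ S.mulVec (z 0))) := by
            exact mul_le_mul_of_nonneg_left ih hα0.le
        _ = α ^ (k+1) * (z 0 ⬝ᵥ S.mulVec (z 0)) := by ring
  refine ⟨hdecay, ?_⟩
  -- square root of S
  obtain ⟨R, hRR, hRsym⟩ : ∃ R : Matrix (Fin p) (Fin p) ℝ, R * R = S ∧ Rᵀ = R := by
    open scoped MatrixOrder in
    refine ⟨CFC.sqrt S, CFC.sqrt_mul_sqrt_self S hS.posSemidef.nonneg, ?_⟩
    open scoped MatrixOrder in
    have := (CFC.sqrt_nonneg S).posSemidef.1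
    rwa [IsHermitian, conjTranspose_eq_transpose_of_trivial] at this
  set w : ℕ → Fin p → ℝ := fun k => R *ᵥ z k with hwdef
  have hV : ∀ k, w k ⬝ᵥ w k = z k ⬝ᵥ S.mulVec (z k) := by
    intro k
    rw [hwdef]
    rw [← hRR, ← mulVec_mulVec, dotProduct_mulVec (z k), ← mulVec_transpose, hRsym]
  -- the bound sequence tends to 0
  have hb : Tendsto (fun k => α ^ k * (z 0 ⬝ᵥ S.mulVec (z 0))) atTop (nhds 0) := by
    simpa using (tendsto_pow_atTop_nhds_zero_of_lt_one hα0.le hα1).mul_const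
      (z 0 ⬝ᵥ S.mulVec (z 0))
  have hbsqrt : Tendsto (fun k => Real.sqrt (α ^ k * (z 0 ⬝ᵥ S.mulVec (z 0)))) atTop (nhds 0) := by
    have := (Real.continuous_sqrt.continuousAt (x := (0:ℝ))).tendsto.comp hb
    simpa [Function.comp_def] using this
  have hw0 : Tendsto w atTop (nhds 0) := by
    rw [tendsto_pi_nhds]
    intro i
    have hbound : ∀ k, ‖w k i‖ ≤ Real.sqrt (α ^ k * (z 0 ⬝ᵥ S.mulVec (z 0))) := by
      intro k
      have h1 : w k i ^ 2 ≤ w k ⬝ᵥ w k := by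
        rw [dotProduct, pow_two]
        exact Finset.single_le_sum (f := fun j => w k j * w k j)
          (fun j _ => mul_self_nonneg (w k j)) (Finset.mem_univ i)
      have h2 : w k i ^ 2 ≤ α ^ k * (z 0 ⬝ᵥ S.mulVec (z 0)) := by
        rw [hV k] at h1; exact h1.trans (hdecay k)
      calc ‖w k i‖ = Real.sqrt (w k i ^ 2) := by
            rw [Real.sqrt_sq_eq_abs]; rfl
        _ ≤ Real.sqrt (α ^ k * (z 0 ⬝ᵥ S.mulVec (z 0))) := Real.sqrt_le_sqrt h2
    have := squeeze_zero_norm hbound hbsqrt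
    simpa using this
  -- recover z from w via R⁻¹
  have hdet : R.det ≠ 0 := by
    intro h0
    have : S.det = 0 := by rw [← hRR, det_mul, h0, mul_zero]
    exact hS.det_pos.ne' this
  have hzw : ∀ k, z k = R⁻¹ *ᵥ w k := by
    intro k
    rw [hwdef, mulVec_mulVec, nonsing_inv_mul R (Ne.isUnit hdet), one_mulVec]
  have hcont : Continuous fun v : Fin p → ℝ => R⁻¹ *ᵥ v :=
    (R⁻¹.mulVecLin).continuous_of_finiteDimensional
  have : Tendsto (fun k => R⁻¹ *ᵥ w k) atTop (nhds (R⁻¹ *ᵥ 0)) :=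
    (hcont.tendsto 0).comp hw0
  rw [mulVec_zero] at this
  exact (funext hzw : z = fun k => R⁻¹ *ᵥ w k) ▸ this
end
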